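/- Let $P$ be a nonzero homogeneous polynomial of degree $k_0$ in $(z,\bar z)$. For every $N \geq k_0$, the space of homogeneous polynomials of degree $N$ decomposes as the direct sum of $P \cdot H_{N-k_0}$ and $\ker(P^\star) \cap H_N$, where $H_d$ denotes the space of homogeneous polynomials of degree $d$ in $(z,\bar z)$. -/

import Mathlib

/-!
Multiplication by `P` and the Fischer operator `P⋆` are adjoint for the Fischer inner product
(on monomials this is `(a + m)! = a! · (a + m)⋯(a + 1)`), and that inner product is positive
definite. So `P⋆(P S) = 0` gives `⟨P S, P S⟩ = ⟨S, P⋆(P S)⟩ = 0`, hence `P S = 0`: this is the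
trivial intersection, and it makes `S ↦ P⋆(P S)` an injective, hence surjective, endomorphism
of the finite-dimensional space `H_{N-k₀}`. For `Q ∈ H_N` choose `S` with `P⋆(P S) = P⋆ Q`;
then `Q = P S + (Q - P S)` with `Q - P S ∈ ker P⋆`.
-/

open MvPolynomial

/-- The Fischer differential operator `P⋆` of a polynomial `P` in `(z, z̄)`:
`P⋆ = ∑ conj(p_{m,n}) ∂_z^m ∂_{z̄}^n` applied to `Q`. Variable `0` is `z`, variable `1` is `z̄`. -/
noncomputable def fischerOp (P Q : MvPolynomial (Fin 2) ℂ) : MvPolynomial (Fin 2) ℂ :=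
  ∑ d ∈ P.support, (starRingEnd ℂ) (P.coeff d) •
    ((pderiv (0 : Fin 2))^[d 0] ((pderiv (1 : Fin 2))^[d 1] Q))

/-- The Fischer inner product: `⟨z^a z̄^b, z^c z̄^d⟩ = a! b! δ_{ac} δ_{bd}`,
linear in the first argument and conjugate-linear in the second. -/
noncomputable def fischerInner (Q T : MvPolynomial (Fin 2) ℂ) : ℂ :=
  ∑ d ∈ Q.support ∪ T.support,
    Q.coeff d * (starRingEnd ℂ) (T.coeff d) * ((d 0).factorial : ℂ) * ((d 1).factorial : ℂ)

/-- The conjugate polynomial `P̄(z,z̄) = conj(P)(z̄,z)`; `P` is real-valued iff `conjSwap P = P`. -/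
noncomputable def conjSwap (P : MvPolynomial (Fin 2) ℂ) : MvPolynomial (Fin 2) ℂ :=
  rename (Equiv.swap (0 : Fin 2) 1) (map (starRingEnd ℂ) P)

open ComplexConjugate

namespace MvPolynomial

variable {σ R : Type*} [CommSemiring R]

theorem coeff_iterate_pderiv (i : σ) (k : ℕ) (p : MvPolynomial σ R) (a : σ →₀ ℕ) :
    coeff a ((pderiv i)^[k] p) = coeff (a + Finsupp.single i k) p * (a i + k).descFactorial k := by
  induction k generalizing a with
  | zero => simp
  | succ k ih =>
    rw [Function.iterate_succ_apply', coeff_pderiv, ih, Nat.descFactorial_succ]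
    simp only [Finsupp.add_apply, Finsupp.single_eq_same, add_assoc, ← Finsupp.single_add]
    rw [add_comm 1 k, show a i + (k + 1) - k = a i + 1 by omega]
    push_cast
    ring

theorem IsHomogeneous.iterate_pderiv {p : MvPolynomial σ R} {n : ℕ} (i : σ) (k : ℕ)
    (h : p.IsHomogeneous n) : ((pderiv i)^[k] p).IsHomogeneous (n - k) := by
  induction k with
  | zero => simpa using h
  | succ k ih =>
    rw [Function.iterate_succ_apply', ← Nat.sub_sub]
    exact ih.pderiv

end MvPolynomial

lemma fischerOp_eq_sum_of_support_subset {P : MvPolynomial (Fin 2) ℂ} {s : Finset (Fin 2 →₀ ℕ)}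
    (h : P.support ⊆ s) (Q : MvPolynomial (Fin 2) ℂ) :
    fischerOp P Q = ∑ d ∈ s, conj (P.coeff d) •
      ((pderiv (0 : Fin 2))^[d 0] ((pderiv (1 : Fin 2))^[d 1] Q)) :=
  Finset.sum_subset h fun d _ hd => by simp [notMem_support_iff.mp hd]

lemma fischerOp_add_left (P P' Q : MvPolynomial (Fin 2) ℂ) :
    fischerOp (P + P') Q = fischerOp P Q + fischerOp P' Q := by
  rw [fischerOp_eq_sum_of_support_subset support_add,
    fischerOp_eq_sum_of_support_subset (Finset.subset_union_left (s₂ := P'.support)),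
    fischerOp_eq_sum_of_support_subset (Finset.subset_union_right (s₁ := P.support)),
    ← Finset.sum_add_distrib]
  simp only [coeff_add, map_add, add_smul]

lemma fischerOp_monomial (m : Fin 2 →₀ ℕ) (p : ℂ) (Q : MvPolynomial (Fin 2) ℂ) :
    fischerOp (monomial m p) Q =
      conj p • (pderiv (0 : Fin 2))^[m 0] ((pderiv (1 : Fin 2))^[m 1] Q) := by
  rw [fischerOp_eq_sum_of_support_subset support_monomial_subset, Finset.sum_singleton,
    coeff_monomial, if_pos rfl]

lemma coeff_fischerOp_monomial (m : Fin 2 →₀ ℕ) (p : ℂ) (Q : MvPolynomial (Fin 2) ℂ)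
    (a : Fin 2 →₀ ℕ) :
    coeff a (fischerOp (monomial m p) Q) =
      conj p * coeff (a + m) Q * (a 0 + m 0).descFactorial (m 0) *
        (a 1 + m 1).descFactorial (m 1) := by
  have hm : Finsupp.single 0 (m 0) + Finsupp.single 1 (m 1) = m := by
    ext i; fin_cases i <;> simp
  rw [fischerOp_monomial, coeff_smul, coeff_iterate_pderiv, coeff_iterate_pderiv, add_assoc, hm]
  simp only [Finsupp.add_apply, Finsupp.single_eq_of_ne one_ne_zero, add_zero, smul_eq_mul]
  ring

lemma fischerInner_eq_sum_of_support_subset (Q : MvPolynomial (Fin 2) ℂ)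
    {T : MvPolynomial (Fin 2) ℂ} {s : Finset (Fin 2 →₀ ℕ)} (h : T.support ⊆ s) :
    fischerInner Q T = ∑ d ∈ s,
      Q.coeff d * conj (T.coeff d) * ((d 0).factorial : ℂ) * ((d 1).factorial : ℂ) := by
  have hvanish : ∀ d ∉ T.support,
      Q.coeff d * conj (T.coeff d) * ((d 0).factorial : ℂ) * ((d 1).factorial : ℂ) = 0 :=
    fun d hd => by simp [notMem_support_iff.mp hd]
  rw [fischerInner, ← Finset.sum_subset Finset.subset_union_right fun d _ => hvanish d,
    Finset.sum_subset h fun d _ => hvanish d]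

lemma fischerInner_add_left (Q Q' T : MvPolynomial (Fin 2) ℂ) :
    fischerInner (Q + Q') T = fischerInner Q T + fischerInner Q' T := by
  simp only [fischerInner_eq_sum_of_support_subset _ (subset_refl T.support), coeff_add,
    add_mul, Finset.sum_add_distrib]

lemma fischerInner_add_right (Q T T' : MvPolynomial (Fin 2) ℂ) :
    fischerInner Q (T + T') = fischerInner Q T + fischerInner Q T' := by
  rw [fischerInner_eq_sum_of_support_subset _ support_add,
    fischerInner_eq_sum_of_support_subset _ (Finset.subset_union_left (s₂ := T'.support)),
    fischerInner_eq_sum_of_support_subset _ (Finset.subset_union_right (s₁ := T.support)),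
    ← Finset.sum_add_distrib]
  simp only [coeff_add, map_add, mul_add, add_mul]

lemma fischerInner_zero_right (Q : MvPolynomial (Fin 2) ℂ) : fischerInner Q 0 = 0 := by
  simp [fischerInner]

lemma fischerInner_monomial_left (a : Fin 2 →₀ ℕ) (s : ℂ) (T : MvPolynomial (Fin 2) ℂ) :
    fischerInner (monomial a s) T =
      s * conj (T.coeff a) * ((a 0).factorial : ℂ) * ((a 1).factorial : ℂ) := by
  rw [fischerInner_eq_sum_of_support_subset _ (Finset.subset_insert a T.support),
    Finset.sum_eq_single_of_mem a (Finset.mem_insert_self a _), coeff_monomial, if_pos rfl]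
  intro d _ hd
  rw [coeff_monomial, if_neg (Ne.symm hd), zero_mul, zero_mul, zero_mul]

theorem fischerInner_mul_left (P S T : MvPolynomial (Fin 2) ℂ) :
    fischerInner (P * S) T = fischerInner S (fischerOp P T) := by
  induction P using MvPolynomial.induction_on' with
  | add P P' hP hP' =>
    rw [add_mul, fischerInner_add_left, hP, hP', fischerOp_add_left, fischerInner_add_right]
  | monomial m p =>
    induction S using MvPolynomial.induction_on' with
    | add S S' hS hS' => rw [mul_add, fischerInner_add_left, fischerInner_add_left, hS, hS']
    | monomial a s =>
      rw [monomial_mul, fischerInner_monomial_left, fischerInner_monomial_left,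
        coeff_fischerOp_monomial, add_comm a m]
      have hfac (i : Fin 2) : ((m i + a i).factorial : ℂ) =
          (a i).factorial * (a i + m i).descFactorial (m i) := by
        rw [add_comm (m i), ← Nat.factorial_mul_descFactorial (Nat.le_add_left _ _),
          Nat.add_sub_cancel, Nat.cast_mul]
      simp only [Finsupp.add_apply, hfac, map_mul, Complex.conj_conj, map_natCast]
      ring

theorem eq_zero_of_fischerInner_self_eq_zero {Q : MvPolynomial (Fin 2) ℂ}
    (h : fischerInner Q Q = 0) : Q = 0 := by
  have hterm (d : Fin 2 →₀ ℕ) :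
      Q.coeff d * conj (Q.coeff d) * ((d 0).factorial : ℂ) * ((d 1).factorial : ℂ) =
        ((‖Q.coeff d‖ ^ 2 * (d 0).factorial * (d 1).factorial : ℝ) : ℂ) := by
    rw [Complex.mul_conj']
    push_cast
    ring
  rw [fischerInner, Finset.union_self] at h
  simp only [hterm, ← Complex.ofReal_sum, Complex.ofReal_eq_zero] at h
  rw [Finset.sum_eq_zero_iff_of_nonneg fun d _ => by positivity] at h
  ext d
  by_contra hd
  have hpos : 0 < ‖Q.coeff d‖ := norm_pos_iff.mpr hd
  exact (h d (mem_support_iff.mpr hd)).not_gt (by positivity)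

lemma fischerOp_isHomogeneous {P Q : MvPolynomial (Fin 2) ℂ} {k n : ℕ}
    (hP : P.IsHomogeneous k) (hQ : Q.IsHomogeneous n) :
    (fischerOp P Q).IsHomogeneous (n - k) := by
  refine IsHomogeneous.sum _ _ _ fun d hd => ?_
  have hdeg : d 0 + d 1 = k := by
    simpa [Finsupp.weight_apply, Finsupp.sum_fintype] using hP (mem_support_iff.mp hd)
  have hD := (hQ.iterate_pderiv 1 (d 1)).iterate_pderiv 0 (d 0)
  rw [Nat.sub_sub, add_comm, hdeg] at hD
  exact (homogeneousSubmodule (Fin 2) ℂ (n - k)).smul_mem _ hD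

noncomputable def fischerOpLinearMap (P : MvPolynomial (Fin 2) ℂ) :
    Module.End ℂ (MvPolynomial (Fin 2) ℂ) :=
  ∑ d ∈ P.support, conj (P.coeff d) •
    ((pderiv (0 : Fin 2)).toLinearMap ^ d 0 * (pderiv (1 : Fin 2)).toLinearMap ^ d 1)

lemma fischerOpLinearMap_apply (P Q : MvPolynomial (Fin 2) ℂ) :
    fischerOpLinearMap P Q = fischerOp P Q := by
  simp [fischerOpLinearMap, fischerOp, Module.End.pow_apply]

lemma fischerOp_sub_right (P Q Q' : MvPolynomial (Fin 2) ℂ) :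
    fischerOp P (Q - Q') = fischerOp P Q - fischerOp P Q' := by
  simp only [← fischerOpLinearMap_apply, map_sub]

theorem mul_eq_zero_of_fischerOp_mul_eq_zero {P S : MvPolynomial (Fin 2) ℂ}
    (h : fischerOp P (P * S) = 0) : P * S = 0 :=
  eq_zero_of_fischerInner_self_eq_zero <| by
    rw [fischerInner_mul_left, h, fischerInner_zero_right]

theorem exists_fischerOp_mul_eq {P T : MvPolynomial (Fin 2) ℂ} {k n : ℕ}
    (hP : P.IsHomogeneous k) (hP0 : P ≠ 0) (hT : T.IsHomogeneous n) :
    ∃ S, S.IsHomogeneous n ∧ fischerOp P (P * S) = T := by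
  have : Module.Finite ℂ (homogeneousSubmodule (Fin 2) ℂ n) :=
    Module.Finite.iff_fg.mpr (homogeneousSubmodule_fg _ _ n)
  let L : Module.End ℂ (homogeneousSubmodule (Fin 2) ℂ n) :=
    (fischerOpLinearMap P ∘ₗ LinearMap.mulLeft ℂ P).restrict fun S hS => by
      simpa [fischerOpLinearMap_apply] using fischerOp_isHomogeneous hP (hP.mul hS)
  have hL (S) : (L S : MvPolynomial (Fin 2) ℂ) = fischerOp P (P * S) :=
    fischerOpLinearMap_apply _ _
  have hinj : Function.Injective L := by
    refine (injective_iff_map_eq_zero L).mpr fun S hS => Subtype.ext ?_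
    have := mul_eq_zero_of_fischerOp_mul_eq_zero ((hL S).symm.trans congr(Subtype.val $hS))
    exact (mul_eq_zero.mp this).resolve_left hP0
  obtain ⟨S, hS⟩ := LinearMap.injective_iff_surjective.mp hinj ⟨T, hT⟩
  exact ⟨S, S.2, (hL S).symm.trans congr(Subtype.val $hS)⟩

/-- The homogeneous polynomials of degree `N` decompose as the direct sum of
`P · H_{N-k₀}` and `ker P⋆ ∩ H_N`: every homogeneous `Q` of degree `N` is a sum of
the two pieces, and the two subspaces intersect trivially. -/
theorem fischer_direct_sum (k0 N : ℕ) (hN : k0 ≤ N)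
    (P : MvPolynomial (Fin 2) ℂ) (hP : P.IsHomogeneous k0) (hP0 : P ≠ 0) :
    (∀ Q : MvPolynomial (Fin 2) ℂ, Q.IsHomogeneous N →
      ∃ S T : MvPolynomial (Fin 2) ℂ, S.IsHomogeneous (N - k0) ∧ T.IsHomogeneous N ∧
        fischerOp P T = 0 ∧ Q = P * S + T) ∧
    (∀ Q S : MvPolynomial (Fin 2) ℂ, Q.IsHomogeneous N → S.IsHomogeneous (N - k0) →
      Q = P * S → fischerOp P Q = 0 → Q = 0) := by
  refine ⟨fun Q hQ => ?_, fun Q S _ _ hQ hPQ => ?_⟩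
  · obtain ⟨S, hS, hPS⟩ := exists_fischerOp_mul_eq hP hP0 (fischerOp_isHomogeneous hP hQ)
    have hPS_deg : (P * S).IsHomogeneous N := by
      simpa [Nat.add_sub_cancel' hN] using hP.mul hS
    refine ⟨S, Q - P * S, hS, hQ.sub hPS_deg, ?_, by ring⟩
    rw [fischerOp_sub_right, hPS, sub_self]
  · subst hQ
    exact mul_eq_zero_of_fischerOp_mul_eq_zero hPQ
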